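/- arXiv:1404.1103 — 2 statements merged into one kernel-verified Lean document; each statement's English description precedes it below -/
import Mathlib

section
/- Let z, θ be independent uniform (0,1) random variables, X := √(-2 log z)·cos(2πθ), and Y the discretized version obtained by rounding z and θ to the nearest half-integer multiple of 1/N with N = ⌊δ^{-3}⌋, for δ sufficiently small. Then Pr(|X - Y| > δ) < δ. -/
/-!
Away from the strips `z < δ/4` and `z > 1 - δ/4`, of total measure `δ/2`, the Box–Muller map is
stable under moving each coordinate by at most `1/(2N) ≤ δ³`: there `-2 log z ≥ δ/2` keeps the
square root away from its singular point, so the radius moves by at most `δ/2`, and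
`-2 log z ≤ 16/δ` bounds the radius multiplying the `O(δ³)` error of the cosine.
-/

open Real MeasureTheory

/-- Rounding of `z` to the nearest half-integer multiple of `1/N`. -/
noncomputable def rnd (N : ℕ) (z : ℝ) : ℝ := (⌊z * N⌋ + 1 / 2) / N

open Set

noncomputable def boxMuller (z θ : ℝ) : ℝ := √(-2 * log z) * cos (2 * π * θ)

lemma abs_rnd_sub_le {N : ℕ} (hN : 0 < N) (z : ℝ) : |rnd N z - z| ≤ 1 / (2 * N) := by
  have hN' : (0 : ℝ) < N := Nat.cast_pos.2 hN
  have hfract : |1 / 2 - Int.fract (z * N)| ≤ 1 / 2 :=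
    abs_le.2 ⟨by linarith [Int.fract_lt_one (z * N)], by linarith [Int.fract_nonneg (z * N)]⟩
  have hdiff : rnd N z - z = (1 / 2 - Int.fract (z * N)) / N := by
    rw [rnd, ← Int.self_sub_floor]
    field_simp
    ring
  calc |rnd N z - z| = |1 / 2 - Int.fract (z * N)| / N := by rw [hdiff, abs_div, abs_of_pos hN']
    _ ≤ 1 / 2 / N := by gcongr
    _ = 1 / (2 * N) := by rw [div_div]

lemma abs_rnd_floor_inv_pow_three_sub_le {δ : ℝ} (hδ : 0 < δ) (hδ₁ : δ ≤ 1) (z : ℝ) :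
    |rnd ⌊δ⁻¹ ^ 3⌋₊ z - z| ≤ δ ^ 3 := by
  have hhalf : δ⁻¹ ^ 3 / 2 < ⌊δ⁻¹ ^ 3⌋₊ :=
    Nat.div_two_lt_floor (one_le_pow₀ ((one_le_inv₀ hδ).2 hδ₁))
  have hN : 0 < ⌊δ⁻¹ ^ 3⌋₊ := Nat.cast_pos.1 (lt_trans (by positivity) hhalf)
  refine (abs_rnd_sub_le hN z).trans ?_
  rw [div_le_iff₀ (by positivity)]
  calc (1 : ℝ) = δ ^ 3 * δ⁻¹ ^ 3 := by field_simp
    _ ≤ δ ^ 3 * (2 * ⌊δ⁻¹ ^ 3⌋₊) := by gcongr; linarith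

lemma log_sub_log_le_div {x y : ℝ} (hx : 0 < x) (hy : 0 < y) : log x - log y ≤ (x - y) / y := by
  rw [← log_div hx.ne' hy.ne', sub_div, div_self hy.ne']
  exact log_le_sub_one_of_pos (div_pos hx hy)

lemma abs_log_sub_log_le {x y c : ℝ} (hc : 0 < c) (hx : c ≤ x) (hy : c ≤ y) :
    |log x - log y| ≤ |x - y| / c := by
  have key : ∀ {u v : ℝ}, c ≤ u → c ≤ v → log u - log v ≤ |u - v| / c := fun hu hv =>
    (log_sub_log_le_div (hc.trans_le hu) (hc.trans_le hv)).trans <|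
      div_le_div₀ (abs_nonneg _) (le_abs_self _) hc hv
  exact abs_sub_le_iff.2 ⟨key hx hy, abs_sub_comm x y ▸ key hy hx⟩

lemma abs_sqrt_sub_sqrt_le {a b : ℝ} (ha : 0 < a) (hb : 0 ≤ b) :
    |√a - √b| ≤ |a - b| / √a := by
  have hsa : 0 < √a := sqrt_pos.2 ha
  have hab : a - b = (√a - √b) * (√a + √b) := by
    linear_combination (sq_sqrt hb) - (sq_sqrt ha.le)
  rw [le_div_iff₀ hsa, hab, abs_mul, abs_of_nonneg (add_nonneg hsa.le (sqrt_nonneg b))]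
  gcongr
  linarith [sqrt_nonneg b]

lemma two_mul_one_sub_le_neg_two_mul_log {z : ℝ} (hz : 0 < z) : 2 * (1 - z) ≤ -2 * log z := by
  linarith [log_le_sub_one_of_pos hz]

lemma neg_two_mul_log_le_two_div {z : ℝ} (hz : 0 ≤ z) : -2 * log z ≤ 2 / z := by
  rw [div_eq_mul_inv]
  linarith [neg_inv_le_log hz]

lemma abs_cos_two_pi_mul_sub_le (θ θ' : ℝ) :
    |cos (2 * π * θ) - cos (2 * π * θ')| ≤ 2 * π * |θ - θ'| := by
  refine (abs_cos_sub_cos_le _ _).trans_eq ?_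
  rw [← mul_sub, abs_mul, abs_of_pos two_pi_pos]

lemma abs_sqrt_neg_two_mul_log_sub_le {δ z z' : ℝ} (hδ : 0 < δ) (hδ₀ : δ ≤ 1 / 2048)
    (hz : δ / 4 ≤ z) (hz₁ : z ≤ 1 - δ / 4) (hz' : δ / 8 ≤ z') (hz'₁ : z' ≤ 1)
    (hzz' : |z - z'| ≤ δ ^ 3) :
    |√(-2 * log z) - √(-2 * log z')| ≤ δ / 2 := by
  have hlog : |log z - log z'| ≤ 8 * δ ^ 2 := by
    calc |log z - log z'| ≤ |z - z'| / (δ / 8) :=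
          abs_log_sub_log_le (by positivity) (by linarith) hz'
      _ ≤ δ ^ 3 / (δ / 8) := by gcongr
      _ = 8 * δ ^ 2 := by field_simp
  have hab : |-2 * log z - -2 * log z'| ≤ 16 * δ ^ 2 := by
    rw [← mul_sub, abs_mul, abs_neg, abs_two]
    linarith
  have ha : δ / 2 ≤ -2 * log z := by
    linarith [two_mul_one_sub_le_neg_two_mul_log (z := z) (by linarith)]
  have hb : 0 ≤ -2 * log z' := by linarith [log_nonpos (x := z') (by linarith) (by linarith)]
  have hsa : 32 * δ ≤ √(-2 * log z) := (le_sqrt (by positivity) (by linarith)).2 (by nlinarith)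
  calc |√(-2 * log z) - √(-2 * log z')| ≤ |-2 * log z - -2 * log z'| / √(-2 * log z) :=
        abs_sqrt_sub_sqrt_le (by linarith) hb
    _ ≤ 16 * δ ^ 2 / (32 * δ) := by gcongr
    _ = δ / 2 := by field_simp; ring

lemma abs_boxMuller_sub_le {δ z θ z' θ' : ℝ} (hδ : 0 < δ) (hδ₀ : δ ≤ 1 / 2048)
    (hz : δ / 4 ≤ z) (hz₁ : z ≤ 1 - δ / 4) (hzz' : |z - z'| ≤ δ ^ 3) (hθθ' : |θ - θ'| ≤ δ ^ 3) :
    |boxMuller z θ - boxMuller z' θ'| ≤ δ := by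
  have hδ3 : δ ^ 3 ≤ δ / 8 := by nlinarith [pow_pos hδ 2, sq_nonneg δ]
  obtain ⟨hz'₀, hz'₁⟩ := abs_le.1 hzz'
  have hz' : δ / 8 ≤ z' := by linarith
  have hr : |√(-2 * log z) - √(-2 * log z')| ≤ δ / 2 :=
    abs_sqrt_neg_two_mul_log_sub_le hδ hδ₀ hz hz₁ hz' (by linarith) hzz'
  have hr' : √(-2 * log z') ≤ 4 / δ := by
    refine (sqrt_le_left (by positivity)).2 ((neg_two_mul_log_le_two_div (by linarith)).trans ?_)
    rw [div_pow, div_le_div_iff₀ (by linarith) (by positivity)]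
    nlinarith
  have hangle : |cos (2 * π * θ) - cos (2 * π * θ')| ≤ 7 * δ ^ 3 :=
    (abs_cos_two_pi_mul_sub_le θ θ').trans <| by nlinarith [pi_lt_d2, abs_nonneg (θ - θ')]
  calc |boxMuller z θ - boxMuller z' θ'|
      = |(√(-2 * log z) - √(-2 * log z')) * cos (2 * π * θ) +
          √(-2 * log z') * (cos (2 * π * θ) - cos (2 * π * θ'))| := by
        rw [boxMuller, boxMuller]; ring_nf
    _ ≤ δ / 2 * 1 + 4 / δ * (7 * δ ^ 3) := by
        refine (abs_add_le _ _).trans (add_le_add ?_ ?_) <;> rw [abs_mul]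
        · exact mul_le_mul hr (abs_cos_le_one _) (abs_nonneg _) (by positivity)
        · rw [abs_of_nonneg (sqrt_nonneg _)]
          exact mul_le_mul hr' hangle (abs_nonneg _) (by positivity)
    _ ≤ δ := by field_simp; nlinarith

lemma volume_Ioo_union_Ioo_prod_Ioo_le {η : ℝ} (hη : 0 ≤ η) :
    volume ((Ioo 0 η ∪ Ioo (1 - η) 1) ×ˢ Ioo (0 : ℝ) 1) ≤ ENNReal.ofReal (2 * η) := by
  rw [Measure.volume_eq_prod, Measure.prod_prod, Real.volume_Ioo, sub_zero, ENNReal.ofReal_one,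
    mul_one, two_mul, ENNReal.ofReal_add hη hη]
  refine (measure_union_le _ _).trans_eq ?_
  rw [Real.volume_Ioo, Real.volume_Ioo, sub_zero, sub_sub_cancel]

/-- for `δ` sufficiently small, with `z, θ` independent uniform on `(0,1)`,
`X := √(-2 log z)·cos(2πθ)`, and `Y` its discretization obtained by rounding `z, θ` to the
nearest half-integer multiple of `1/N` with `N = ⌊δ⁻³⌋`, we have `Pr(|X - Y| > δ) < δ`. -/
theorem stmt3 :
    ∃ δ₀ : ℝ, 0 < δ₀ ∧ ∀ δ : ℝ, 0 < δ → δ < δ₀ →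
      (volume {p : ℝ × ℝ | p.1 ∈ Set.Ioo (0:ℝ) 1 ∧ p.2 ∈ Set.Ioo (0:ℝ) 1 ∧
        δ < |Real.sqrt (-2 * Real.log p.1) * Real.cos (2 * π * p.2) -
              Real.sqrt (-2 * Real.log (rnd ⌊δ⁻¹ ^ 3⌋₊ p.1)) *
                Real.cos (2 * π * (rnd ⌊δ⁻¹ ^ 3⌋₊ p.2))|}) < ENNReal.ofReal δ := by
  refine ⟨1 / 2048, by norm_num, fun δ hδ hδ₀ => ?_⟩
  have hround := abs_rnd_floor_inv_pow_three_sub_le hδ (by linarith)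
  have hsub : {p : ℝ × ℝ | p.1 ∈ Ioo (0:ℝ) 1 ∧ p.2 ∈ Ioo (0:ℝ) 1 ∧
      δ < |boxMuller p.1 p.2 - boxMuller (rnd ⌊δ⁻¹ ^ 3⌋₊ p.1) (rnd ⌊δ⁻¹ ^ 3⌋₊ p.2)|} ⊆
      (Ioo 0 (δ / 4) ∪ Ioo (1 - δ / 4) 1) ×ˢ Ioo 0 1 := by
    rintro ⟨z, θ⟩ ⟨hz, hθ, hfar⟩
    refine ⟨?_, hθ⟩
    by_contra hmid
    simp only [mem_union, mem_Ioo, not_or, not_and, not_lt] at hmid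
    have hz₁ : z ≤ 1 - δ / 4 := not_lt.1 fun h => not_le.2 hz.2 (hmid.2 h)
    exact absurd hfar (not_lt.2 <| abs_boxMuller_sub_le hδ hδ₀.le (hmid.1 hz.1) hz₁
      (abs_sub_comm z _ ▸ hround z) (abs_sub_comm θ _ ▸ hround θ))
  refine (measure_mono hsub).trans_lt <|
    (volume_Ioo_union_Ioo_prod_Ioo_le (by positivity)).trans_lt ?_
  exact (ENNReal.ofReal_lt_ofReal_iff hδ).2 (by linarith)
end

section
/- Let h be a Hermite polynomial of degree d on ℝ^n (a product of normalized one-variable Hermite polynomials of total degree d). Then the sum of the absolute values of the coefficients of h (in the monomial basis) is at most C^d for an absolute constant C. -/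
/-!
The ℓ¹ norm of the coefficient vector is submultiplicative, so it suffices to bound each
one-variable factor `h_k(x_i)`. The coefficient of `x^j` in `He_k` is `±(k-j-1)‼ · C(k,j)`, and
`(k-j-1)‼² ≤ (k-j)! ≤ k!`, so the coefficients of `h_k = He_k / √k!` have absolute values summing
to at most `∑_j C(k,j) = 2^k`. Hence `C = 2` works.
-/

open Finset
open scoped Nat Polynomial

theorem Nat.doubleFactorial_le_doubleFactorial_succ : ∀ n : ℕ, n‼ ≤ (n + 1)‼
  | 0 | 1 => by decide
  | n + 2 => by
    rw [Nat.doubleFactorial_add_two, Nat.doubleFactorial_add_two]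
    exact Nat.mul_le_mul (by omega) (Nat.doubleFactorial_le_doubleFactorial_succ n)

theorem Nat.doubleFactorial_sub_one_sq_le_factorial : ∀ m : ℕ, (m - 1)‼ ^ 2 ≤ m !
  | 0 => le_rfl
  | s + 1 => by
    rw [Nat.factorial_eq_mul_doubleFactorial, sq, Nat.add_sub_cancel]
    exact Nat.mul_le_mul_right _ (Nat.doubleFactorial_le_doubleFactorial_succ s)

theorem Polynomial.abs_coeff_hermite_le (k j : ℕ) :
    |((hermite k).coeff j : ℝ)| ≤ √(k ! : ℝ) * k.choose j := by
  rw [coeff_hermite]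
  split_ifs
  · push_cast
    rw [abs_mul, abs_mul, abs_pow, abs_neg, abs_one, one_pow, one_mul, Nat.abs_cast,
      Nat.abs_cast]
    gcongr
    rw [Real.le_sqrt (by positivity) (by positivity)]
    exact_mod_cast (Nat.doubleFactorial_sub_one_sq_le_factorial (k - j)).trans
      (Nat.factorial_le (Nat.sub_le k j))
  · simp only [Int.cast_zero, abs_zero]
    positivity

theorem Polynomial.sum_abs_coeff_hermite_le (k : ℕ) :
    ∑ j ∈ range (k + 1), |((hermite k).coeff j : ℝ)| ≤ √(k ! : ℝ) * 2 ^ k :=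
  calc ∑ j ∈ range (k + 1), |((hermite k).coeff j : ℝ)|
      ≤ ∑ j ∈ range (k + 1), √(k ! : ℝ) * k.choose j :=
        sum_le_sum fun j _ => abs_coeff_hermite_le k j
    _ = √(k ! : ℝ) * 2 ^ k := by
        rw [← mul_sum, ← Nat.cast_sum, Nat.sum_range_choose, Nat.cast_pow, Nat.cast_ofNat]

namespace MvPolynomial

section l1Norm

variable {σ R : Type*} [NormedCommRing R]

noncomputable def l1Norm (p : MvPolynomial σ R) : ℝ := ∑ m ∈ p.support, ‖coeff m p‖

theorem l1Norm_nonneg (p : MvPolynomial σ R) : 0 ≤ l1Norm p :=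
  sum_nonneg fun _ _ => norm_nonneg _

theorem l1Norm_eq_sum_of_support_subset {p : MvPolynomial σ R} {s : Finset (σ →₀ ℕ)}
    (h : p.support ⊆ s) : l1Norm p = ∑ m ∈ s, ‖coeff m p‖ :=
  sum_subset h fun m _ hm => by rw [notMem_support_iff.mp hm, norm_zero]

theorem l1Norm_monomial (m : σ →₀ ℕ) (c : R) : l1Norm (monomial m c) = ‖c‖ := by
  classical
  rw [l1Norm_eq_sum_of_support_subset support_monomial_subset, sum_singleton,
    coeff_monomial, if_pos rfl]

theorem l1Norm_add_le (p q : MvPolynomial σ R) : l1Norm (p + q) ≤ l1Norm p + l1Norm q := by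
  classical
  rw [l1Norm_eq_sum_of_support_subset support_add,
    l1Norm_eq_sum_of_support_subset (subset_union_left (s₂ := q.support)),
    l1Norm_eq_sum_of_support_subset (subset_union_right (s₁ := p.support)), ← sum_add_distrib]
  exact sum_le_sum fun m _ => by rw [coeff_add]; exact norm_add_le _ _

theorem l1Norm_sum_le {ι : Type*} (s : Finset ι) (f : ι → MvPolynomial σ R) :
    l1Norm (∑ i ∈ s, f i) ≤ ∑ i ∈ s, l1Norm (f i) :=
  le_sum_of_subadditive l1Norm (by simp [l1Norm]) l1Norm_add_le s f

theorem l1Norm_mul_le (p q : MvPolynomial σ R) : l1Norm (p * q) ≤ l1Norm p * l1Norm q := by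
  have hpq : p * q = ∑ a ∈ p.support, ∑ b ∈ q.support, monomial (a + b) (coeff a p * coeff b q) := by
    conv_lhs => rw [p.as_sum, q.as_sum]
    simp only [sum_mul_sum, monomial_mul]
  calc l1Norm (p * q)
      ≤ ∑ a ∈ p.support, ∑ b ∈ q.support, ‖coeff a p * coeff b q‖ := by
        rw [hpq]
        refine (l1Norm_sum_le _ _).trans (sum_le_sum fun a _ => ?_)
        refine (l1Norm_sum_le _ _).trans (sum_le_sum fun b _ => ?_)
        rw [l1Norm_monomial]
    _ ≤ ∑ a ∈ p.support, ∑ b ∈ q.support, ‖coeff a p‖ * ‖coeff b q‖ := by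
        gcongr with a _ b _
        exact norm_mul_le _ _
    _ = l1Norm p * l1Norm q := by rw [l1Norm, l1Norm, sum_mul_sum]

theorem l1Norm_prod_le [NormOneClass R] {ι : Type*} (s : Finset ι) (f : ι → MvPolynomial σ R) :
    l1Norm (∏ i ∈ s, f i) ≤ ∏ i ∈ s, l1Norm (f i) := by
  classical
  induction s using Finset.induction with
  | empty => rw [prod_empty, prod_empty, ← C_1, ← monomial_zero', l1Norm_monomial, norm_one]
  | insert i s hi ih =>
    rw [prod_insert hi, prod_insert hi]
    exact (l1Norm_mul_le _ _).trans (by gcongr; exact l1Norm_nonneg _)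

theorem l1Norm_smul_le (r : R) (p : MvPolynomial σ R) : l1Norm (r • p) ≤ ‖r‖ * l1Norm p := by
  rw [← C_mul', ← monomial_zero']
  exact (l1Norm_mul_le _ _).trans_eq (by rw [l1Norm_monomial])

theorem l1Norm_aeval_X_le (p : R[X]) (i : σ) :
    l1Norm (Polynomial.aeval (X i : MvPolynomial σ R) p) ≤ ∑ j ∈ range (p.natDegree + 1), ‖p.coeff j‖ := by
  rw [Polynomial.aeval_eq_sum_range]
  refine (l1Norm_sum_le _ _).trans (sum_le_sum fun j _ => ?_)
  rw [X_pow_eq_monomial, smul_monomial, smul_eq_mul, mul_one, l1Norm_monomial]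

end l1Norm

theorem l1Norm_normalized_hermite_le {σ : Type*} (i : σ) (k : ℕ) :
    l1Norm ((√(k ! : ℝ))⁻¹ • Polynomial.aeval (X i : MvPolynomial σ ℝ) ((Polynomial.hermite k).map (Int.castRingHom ℝ))) ≤ 2 ^ k := by
  have hk : 0 < √(k ! : ℝ) := Real.sqrt_pos.mpr (by positivity)
  have hdeg : ((Polynomial.hermite k).map (Int.castRingHom ℝ)).natDegree = k := by
    rw [(Polynomial.hermite_monic k).natDegree_map, Polynomial.natDegree_hermite]
  calc _ ≤ (√(k ! : ℝ))⁻¹ * ∑ j ∈ range (k + 1), |((Polynomial.hermite k).coeff j : ℝ)| := by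
        refine (l1Norm_smul_le _ _).trans ?_
        rw [Real.norm_of_nonneg (inv_nonneg.mpr hk.le)]
        gcongr
        refine (l1Norm_aeval_X_le _ i).trans_eq ?_
        simp only [hdeg, Polynomial.coeff_map, eq_intCast, Real.norm_eq_abs]
    _ ≤ (√(k ! : ℝ))⁻¹ * (√(k ! : ℝ) * 2 ^ k) := by
        gcongr
        exact Polynomial.sum_abs_coeff_hermite_le k
    _ = 2 ^ k := by rw [inv_mul_cancel_left₀ hk.ne']

end MvPolynomial

open MvPolynomial

/-- The normalized multivariate Hermite polynomial `h_a(x) = ∏ i h_{a_i}(x_i)`, where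
`h_k = (1/√k!)·He_k` and `He_k` is the probabilists' Hermite polynomial. -/
noncomputable def hermiteMv (n : ℕ) (a : Fin n → ℕ) : MvPolynomial (Fin n) ℝ :=
  ∏ i : Fin n, (Real.sqrt (Nat.factorial (a i)))⁻¹ •
    Polynomial.aeval (R := ℝ) (MvPolynomial.X i) ((Polynomial.hermite (a i)).map (Int.castRingHom ℝ))

/-- there is an absolute constant `C` such that for every degree-`d`
multivariate Hermite polynomial `h = ∏ i h_{a_i}(x_i)` (with `d = Σ a_i`), the sum of the
absolute values of its monomial coefficients is at most `C^d`. -/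
theorem stmt11 :
    ∃ C : ℝ, 0 < C ∧ ∀ (n : ℕ) (a : Fin n → ℕ),
      ∑ m ∈ (hermiteMv n a).support, |MvPolynomial.coeff m (hermiteMv n a)| ≤
        C ^ (∑ i, a i) := by
  refine ⟨2, two_pos, fun n a => ?_⟩
  calc _ = l1Norm (hermiteMv n a) := by simp only [l1Norm, Real.norm_eq_abs]
    _ ≤ ∏ i, (2 : ℝ) ^ a i :=
        (l1Norm_prod_le _ _).trans <| prod_le_prod (fun _ _ => l1Norm_nonneg _)
          fun i _ => l1Norm_normalized_hermite_le i (a i)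
    _ = 2 ^ ∑ i, a i := prod_pow_eq_pow_sum _ _ _
end
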